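/- arXiv:math/0101172 — 5 statements merged into one kernel-verified Lean document; each statement's English description precedes it below -/
import Mathlib

section
/- Let 𝔤 be a finite-dimensional real Lie algebra whose Killing form B is negative definite, and let 𝔩 ⊆ 𝔤 be a Lie subalgebra. Suppose ω is a 2-cocycle on 𝔤 which is ad(𝔩)-invariant, i.e. ω([U,X],Y) + ω(X,[U,Y]) = 0 for all U ∈ 𝔩 and all X,Y ∈ 𝔤. Then there exists a unique element Z ∈ 𝔤 such that ω(X,Y) = B(Z,[X,Y]) for all X,Y ∈ 𝔤; moreover Z lies in the centralizer C_𝔤(𝔩) and can be written as Z = Z₀ + Z₁ with Z₀ in the center z(𝔩) of 𝔩 and Z₁ ∈ C_𝔤(𝔩) ∩ 𝔩^⊥, where 𝔩^⊥ is the B-orthogonal complement of 𝔩 in 𝔤. -/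
/-!
Since `B` is negative definite it is nondegenerate, so `ω` is dualised by `B` to a linear map
`D` with `B (D X) Y = ω X Y`; the cocycle identity says exactly that `D` is a derivation. With a
nondegenerate Killing form every derivation is inner, `D = ad Z`, and invariance of `B` gives
`ω X Y = B Z ⁅X, Y⁆`. An element `W` with `B W ⁅X, Y⁆ = 0` for all `X, Y` is central, hence zero,
which yields uniqueness, and, applied to `W = ⁅Z, U⁆` via the Jacobi identity, that
`ad 𝔩`-invariance of `ω` forces `Z` to centralise `𝔩`. Finally `L = 𝔩 ⊕ 𝔩^⊥` as `B` is definite,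
`𝔩^⊥` is `ad 𝔩`-stable, and so both components of `Z` centralise `𝔩`.
-/

open LinearMap (BilinForm)

lemma LinearMap.BilinForm.isCompl_orthogonal_of_anisotropic {K V : Type*} [Field K]
    [AddCommGroup V] [Module K V] [FiniteDimensional K V] {B : BilinForm K V} (hB₀ : B.IsRefl)
    (hB : ∀ x, B x x = 0 → x = 0) (W : Submodule K V) : IsCompl W (B.orthogonal W) :=
  (isCompl_orthogonal_iff_disjoint hB₀).mpr <|
    Submodule.disjoint_def.mpr fun x hxW hxW' => hB x (hxW' x hxW)

namespace LieAlgebra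

variable {K L : Type*} [Field K] [LieRing L] [LieAlgebra K L]

lemma lie_mem_killingForm_orthogonal {𝔩 : LieSubalgebra K L} {Z U : L}
    (hZ : Z ∈ (killingForm K L).orthogonal 𝔩.toSubmodule) (hU : U ∈ 𝔩) :
    ⁅Z, U⁆ ∈ (killingForm K L).orthogonal 𝔩.toSubmodule := by
  intro V hV
  change killingForm K L V ⁅Z, U⁆ = 0
  rw [← lie_skew, map_neg, ← LieModule.traceForm_apply_lie_apply, hZ _ (𝔩.lie_mem hV hU),
    neg_zero]

lemma exists_eq_center_add_orthogonal {𝔩 : LieSubalgebra K L}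
    (h𝔩 : IsCompl 𝔩.toSubmodule ((killingForm K L).orthogonal 𝔩.toSubmodule)) {Z : L}
    (hZ : ∀ U ∈ 𝔩, ⁅Z, U⁆ = 0) :
    ∃ Z₀ Z₁ : L, Z = Z₀ + Z₁ ∧
      Z₀ ∈ 𝔩 ∧ (∀ U ∈ 𝔩, ⁅Z₀, U⁆ = 0) ∧
      (∀ U ∈ 𝔩, ⁅Z₁, U⁆ = 0) ∧ (∀ U ∈ 𝔩, killingForm K L Z₁ U = 0) := by
  obtain ⟨Z₀, hZ₀, Z₁, hZ₁, rfl⟩ :=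
    Submodule.mem_sup.mp (h𝔩.sup_eq_top ▸ Submodule.mem_top (x := Z))
  -- `⁅Z₀, U⁆ ∈ 𝔩` and `⁅Z₁, U⁆ ∈ 𝔩^⊥` add up to `⁅Z, U⁆ = 0`, so both vanish.
  have hZ₁U : ∀ U ∈ 𝔩, ⁅Z₁, U⁆ = 0 := by
    intro U hU
    have hneg : ⁅Z₁, U⁆ = -⁅Z₀, U⁆ := eq_neg_of_add_eq_zero_right (by rw [← add_lie, hZ U hU])
    refine (Submodule.disjoint_def.mp h𝔩.disjoint) _ ?_ (lie_mem_killingForm_orthogonal hZ₁ hU)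
    rw [hneg]
    exact neg_mem (𝔩.lie_mem hZ₀ hU)
  refine ⟨Z₀, Z₁, rfl, hZ₀, fun U hU => ?_, hZ₁U, fun U hU => ?_⟩
  · have hZU := hZ U hU
    rwa [add_lie, hZ₁U U hU, add_zero] at hZU
  · rw [LieModule.traceForm_comm]
    exact hZ₁ U hU

lemma isKilling_of_killingForm_anisotropic (hB : ∀ x : L, killingForm K L x x = 0 → x = 0) :
    IsKilling K L :=
  ⟨(LieSubmodule.eq_bot_iff _).mpr fun x hx => hB x <|
    (LieIdeal.mem_killingCompl K L ⊤).mp hx x (LieSubmodule.mem_top x)⟩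

variable [FiniteDimensional K L] [IsKilling K L]

variable (K) in
lemma eq_zero_of_killingForm_lie_eq_zero {W : L} (hW : ∀ X Y : L, killingForm K L W ⁅X, Y⁆ = 0) :
    W = 0 := by
  have hWX : ∀ X : L, ⁅W, X⁆ = 0 := fun X => (IsKilling.killingForm_nondegenerate K L).1 _
    fun Y => by rw [LieModule.traceForm_apply_lie_apply, hW]
  have hW_center : W ∈ center K L := fun X => by rw [← lie_skew, hWX, neg_zero]
  rwa [center_eq_bot, LieSubmodule.mem_bot] at hW_center

variable (ω : L →ₗ[K] L →ₗ[K] K)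

noncomputable def killingDual : L →ₗ[K] L :=
  ((killingForm K L).toDual (IsKilling.killingForm_nondegenerate K L)).symm.toLinearMap ∘ₗ ω

@[simp]
lemma killingForm_killingDual_apply (X Y : L) : killingForm K L (killingDual ω X) Y = ω X Y :=
  BilinForm.apply_toDual_symm_apply (hB := IsKilling.killingForm_nondegenerate K L) _ _

variable {ω}

lemma killingDual_lie (hω : ω.IsAlt) (hcoc : ∀ X Y W : L, ω ⁅X, Y⁆ W + ω ⁅Y, W⁆ X + ω ⁅W, X⁆ Y = 0)
    (a b : L) : killingDual ω ⁅a, b⁆ = ⁅a, killingDual ω b⁆ - ⁅b, killingDual ω a⁆ := by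
  refine ((killingForm K L).toDual (IsKilling.killingForm_nondegenerate K L)).injective
    (LinearMap.ext fun w => ?_)
  have hpair : ∀ x y : L, killingForm K L ⁅x, killingDual ω y⁆ w = -ω y ⁅x, w⁆ := fun x y => by
    rw [← lie_skew, map_neg, LinearMap.neg_apply, LieModule.traceForm_apply_lie_apply,
      killingForm_killingDual_apply]
  simp only [BilinForm.toDual_def, map_sub, LinearMap.sub_apply, killingForm_killingDual_apply,
    hpair]
  have h₁ := hω.neg ⁅b, w⁆ a
  have h₂ : ω ⁅w, a⁆ b = ω b ⁅a, w⁆ := by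
    rw [← lie_skew w a, map_neg, LinearMap.neg_apply, hω.neg]
  linear_combination hcoc a b w + h₁ - h₂

lemma exists_killingForm_lie_eq_of_isAlt (hω : ω.IsAlt)
    (hcoc : ∀ X Y W : L, ω ⁅X, Y⁆ W + ω ⁅Y, W⁆ X + ω ⁅W, X⁆ Y = 0) :
    ∃ Z : L, ∀ X Y : L, ω X Y = killingForm K L Z ⁅X, Y⁆ := by
  obtain ⟨Z, hZ⟩ := LieDerivation.IsKilling.exists_eq_ad
    (⟨killingDual ω, killingDual_lie hω hcoc⟩ : LieDerivation K L L)
  refine ⟨Z, fun X Y => ?_⟩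
  have hZX : ⁅Z, X⁆ = killingDual ω X := by simpa using DFunLike.congr_fun hZ X
  rw [← LieModule.traceForm_apply_lie_apply, hZX, killingForm_killingDual_apply]

lemma existsUnique_killingForm_lie_eq_of_isAlt (hω : ω.IsAlt)
    (hcoc : ∀ X Y W : L, ω ⁅X, Y⁆ W + ω ⁅Y, W⁆ X + ω ⁅W, X⁆ Y = 0) :
    ∃! Z : L, ∀ X Y : L, ω X Y = killingForm K L Z ⁅X, Y⁆ := by
  obtain ⟨Z, hZ⟩ := exists_killingForm_lie_eq_of_isAlt hω hcoc
  refine ⟨Z, hZ, fun Z' hZ' => sub_eq_zero.mp <| eq_zero_of_killingForm_lie_eq_zero K fun X Y => ?_⟩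
  rw [map_sub, LinearMap.sub_apply, ← hZ, ← hZ', sub_self]

lemma lie_eq_zero_of_killingForm_lie_eq {Z U : L}
    (hZ : ∀ X Y : L, ω X Y = killingForm K L Z ⁅X, Y⁆)
    (hU : ∀ X Y : L, ω ⁅U, X⁆ Y + ω X ⁅U, Y⁆ = 0) : ⁅Z, U⁆ = 0 :=
  eq_zero_of_killingForm_lie_eq_zero K fun X Y => by
    rw [LieModule.traceForm_apply_lie_apply, leibniz_lie, map_add, ← hZ, ← hZ, hU]

end LieAlgebra

open LieAlgebra in
/-- If `𝔤` is a finite-dimensional real Lie algebra with negative definite Killing form `B`,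
`𝔩 ⊆ 𝔤` a Lie subalgebra, and `ω` an `ad 𝔩`-invariant 2-cocycle on `𝔤`, then there is a
unique `Z ∈ 𝔤` with `ω X Y = B Z ⁅X, Y⁆`; moreover `Z` lies in the centralizer of `𝔩` and
decomposes as `Z₀ + Z₁` with `Z₀` in the center of `𝔩` and `Z₁ ∈ C_𝔤(𝔩) ∩ 𝔩^⊥`. -/
theorem stmt_0 (L : Type*) [LieRing L] [LieAlgebra ℝ L] [FiniteDimensional ℝ L]
    (hB : ∀ x : L, x ≠ 0 → killingForm ℝ L x x < 0)
    (𝔩 : LieSubalgebra ℝ L)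
    (ω : L →ₗ[ℝ] L →ₗ[ℝ] ℝ)
    (halt : ∀ X : L, ω X X = 0)
    (hcoc : ∀ X Y W : L, ω ⁅X, Y⁆ W + ω ⁅Y, W⁆ X + ω ⁅W, X⁆ Y = 0)
    (hinv : ∀ U ∈ 𝔩, ∀ X Y : L, ω ⁅U, X⁆ Y + ω X ⁅U, Y⁆ = 0) :
    (∃! Z : L, ∀ X Y : L, ω X Y = killingForm ℝ L Z ⁅X, Y⁆) ∧
    (∀ Z : L, (∀ X Y : L, ω X Y = killingForm ℝ L Z ⁅X, Y⁆) →
      (∀ U ∈ 𝔩, ⁅Z, U⁆ = 0) ∧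
      ∃ Z₀ Z₁ : L, Z = Z₀ + Z₁ ∧
        Z₀ ∈ 𝔩 ∧ (∀ U ∈ 𝔩, ⁅Z₀, U⁆ = 0) ∧
        (∀ U ∈ 𝔩, ⁅Z₁, U⁆ = 0) ∧ (∀ U ∈ 𝔩, killingForm ℝ L Z₁ U = 0)) := by
  have hB₀ : ∀ x : L, killingForm ℝ L x x = 0 → x = 0 := fun x hx =>
    by_contra fun hx₀ => (hB x hx₀).ne hx
  have := isKilling_of_killingForm_anisotropic hB₀
  refine ⟨existsUnique_killingForm_lie_eq_of_isAlt halt hcoc, fun Z hZ => ?_⟩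
  have hZ𝔩 : ∀ U ∈ 𝔩, ⁅Z, U⁆ = 0 := fun U hU => lie_eq_zero_of_killingForm_lie_eq hZ (hinv U hU)
  exact ⟨hZ𝔩, exists_eq_center_add_orthogonal
    (BilinForm.isCompl_orthogonal_of_anisotropic (LieModule.traceForm_isSymm ℝ L L).isRefl hB₀ _)
    hZ𝔩⟩
end

section
/- Let 𝔤 be a finite-dimensional real Lie algebra whose Killing form B is nondegenerate, let ω be a 2-cocycle on 𝔤, and let F : 𝔤 → 𝔤 be the unique linear endomorphism satisfying B(F(X),Y) = ω(X,Y) for all X,Y ∈ 𝔤. Then F is a derivation of 𝔤, i.e. F([X,Y]) = [F(X),Y] + [X,F(Y)] for all X,Y ∈ 𝔤. -/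
/-!
Pair `F ⁅X, Y⁆ - ⁅F X, Y⁆ - ⁅X, F Y⁆` with an arbitrary `W` under `B`. Invariance of `B` moves
the brackets onto `W`, turning the three terms into `ω ⁅X, Y⁆ W`, `-ω ⁅Y, W⁆ X` and
`-ω ⁅W, X⁆ Y` (the last two using that `ω` is alternating); their sum vanishes by the cocycle
identity, and nondegeneracy of `B` gives the claim.
-/

theorem LinearMap.BilinForm.lieInvariant.map_lie_of_isAlt_cocycle {R L : Type*} [CommRing R]
    [LieRing L] [LieAlgebra R L] {B : LinearMap.BilinForm R L} (hinv : B.lieInvariant L)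
    (hB : B.SeparatingLeft) {ω : L →ₗ[R] L →ₗ[R] R} (halt : ω.IsAlt)
    (hcoc : ∀ X Y W : L, ω ⁅X, Y⁆ W + ω ⁅Y, W⁆ X + ω ⁅W, X⁆ Y = 0)
    {F : L →ₗ[R] L} (hF : ∀ X Y : L, B (F X) Y = ω X Y) (X Y : L) :
    F ⁅X, Y⁆ = ⁅F X, Y⁆ + ⁅X, F Y⁆ := by
  rw [← sub_eq_zero]
  refine hB _ fun W ↦ ?_
  have hFX : B ⁅F X, Y⁆ W = -ω ⁅Y, W⁆ X := by
    rw [← lie_skew, map_neg, LinearMap.neg_apply, hinv, neg_neg, hF, halt.neg]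
  have hFY : B ⁅X, F Y⁆ W = -ω ⁅W, X⁆ Y := by
    rw [hinv, hF, ← lie_skew, map_neg, halt.neg]
  rw [map_sub, map_add, LinearMap.sub_apply, LinearMap.add_apply, hF, hFX, hFY]
  linear_combination hcoc X Y W

/-- If `𝔤` is a finite-dimensional real Lie algebra with nondegenerate Killing form `B`,
`ω` a 2-cocycle on `𝔤`, and `F : 𝔤 → 𝔤` the linear endomorphism with
`B (F X) Y = ω X Y`, then `F` is a derivation of `𝔤`. -/
theorem stmt_2 (L : Type*) [LieRing L] [LieAlgebra ℝ L] [FiniteDimensional ℝ L]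
    (hB : (killingForm ℝ L).Nondegenerate)
    (ω : L →ₗ[ℝ] L →ₗ[ℝ] ℝ)
    (halt : ∀ X : L, ω X X = 0)
    (hcoc : ∀ X Y W : L, ω ⁅X, Y⁆ W + ω ⁅Y, W⁆ X + ω ⁅W, X⁆ Y = 0)
    (F : L →ₗ[ℝ] L)
    (hF : ∀ X Y : L, killingForm ℝ L (F X) Y = ω X Y) :
    ∀ X Y : L, F ⁅X, Y⁆ = ⁅F X, Y⁆ + ⁅X, F Y⁆ :=
  (LieModule.traceForm_lieInvariant ℝ L L).map_lie_of_isAlt_cocycle hB.1 halt hcoc hF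
end

section
/- Let g : ℝ → ℝ be a continuous function which is differentiable at every t ≠ 0 and satisfies the differential equation g'(t) = -coth(t)·g(t) for all t ≠ 0, where coth(t) = cosh(t)/sinh(t). If g is bounded, then g is identically zero. -/
/-!
Multiplying by the integrating factor `sinh` turns the equation into `(g · sinh)' = 0` away from
`0`. Since `g · sinh` is continuous and vanishes at `0`, it vanishes everywhere, so `g = 0` off `0`,
and hence at `0` by continuity.
-/

open Set Real

theorem Continuous.eq_of_hasDerivAt_eq_zero_of_ne {E : Type*} [NormedAddCommGroup E]
    [NormedSpace ℝ E] [CompleteSpace E] {f : ℝ → E} {c : ℝ} (hf : Continuous f)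
    (hf' : ∀ t ≠ c, HasDerivAt f 0 t) (t : ℝ) : f t = f c := by
  have hne : ∀ x ∈ Ioo (min c t) (max c t), x ≠ c := by
    rintro x ⟨hmin, hmax⟩ rfl
    grind
  have hftc := intervalIntegral.integral_eq_sub_of_hasDeriv_right (f' := fun _ => (0 : E))
    hf.continuousOn (fun x hx => (hf' x (hne x hx)).hasDerivWithinAt) intervalIntegrable_const
  rw [intervalIntegral.integral_zero] at hftc
  exact sub_eq_zero.mp hftc.symm

theorem hasDerivAt_mul_sinh_of_hasDerivAt_neg_coth_mul {g : ℝ → ℝ} {t : ℝ} (ht : t ≠ 0)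
    (hg : HasDerivAt g (-(cosh t / sinh t) * g t) t) :
    HasDerivAt (fun s => g s * sinh s) 0 t := by
  have hsinh : sinh t ≠ 0 := sinh_ne_zero.mpr ht
  refine (hg.mul (hasDerivAt_sinh t)).congr_deriv ?_
  field_simp
  ring

theorem mul_sinh_eq_zero_of_hasDerivAt_neg_coth_mul {g : ℝ → ℝ} (hcont : Continuous g)
    (hderiv : ∀ t ≠ 0, HasDerivAt g (-(cosh t / sinh t) * g t) t) (t : ℝ) :
    g t * sinh t = 0 := by
  have hconst := (hcont.mul continuous_sinh).eq_of_hasDerivAt_eq_zero_of_ne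
    (fun s hs => hasDerivAt_mul_sinh_of_hasDerivAt_neg_coth_mul hs (hderiv s hs)) t
  simpa using hconst

theorem stmt_5_general (g : ℝ → ℝ) (hcont : Continuous g)
    (hderiv : ∀ t : ℝ, t ≠ 0 →
      HasDerivAt g (-(Real.cosh t / Real.sinh t) * g t) t) :
    ∀ t : ℝ, g t = 0 := by
  have hoff : EqOn g 0 {0}ᶜ := fun t ht =>
    (mul_eq_zero.mp (mul_sinh_eq_zero_of_hasDerivAt_neg_coth_mul hcont hderiv t)).resolve_right
      (sinh_ne_zero.mpr ht)
  exact congrFun (hcont.ext_on (dense_compl_singleton 0) continuous_const hoff)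

/-- A bounded continuous function `g : ℝ → ℝ`, differentiable away from `0` with
`g' t = -coth t * g t` for `t ≠ 0`, vanishes identically. -/
theorem stmt_5 (g : ℝ → ℝ) (hcont : Continuous g)
    (hderiv : ∀ t : ℝ, t ≠ 0 →
      HasDerivAt g (-(Real.cosh t / Real.sinh t) * g t) t)
    (hbdd : ∃ C : ℝ, ∀ t : ℝ, |g t| ≤ C) :
    ∀ t : ℝ, g t = 0 :=
  stmt_5_general g hcont hderiv
end

section
/- Fix real numbers ℓ and t with ℓ·t ≠ 0, and let e₊, e₋ be the standard basis of ℂ². Let J : ℂ² → ℂ² be the unique ℂ-linear map satisfying J(e₊ + e^{2ℓt}·e₋) = i·(e₊ + e^{2ℓt}·e₋) and J(e₊ + e^{-2ℓt}·e₋) = -i·(e₊ + e^{-2ℓt}·e₋) (this J exists and is unique because e^{2ℓt} ≠ e^{-2ℓt}, so the two vectors form a basis of ℂ²). Then J(e₊ - e₋) = -coth(ℓt)·i·(e₊ + e₋) and J(i·(e₊ + e₋)) = tanh(ℓt)·(e₊ - e₋). -/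
set_option maxHeartbeats 1000000


/-- With `e₊ = ![1,0]`, `e₋ = ![0,1]` in `ℂ²` and `ℓ t ≠ 0`, if the `ℂ`-linear map
`J : ℂ² → ℂ²` satisfies `J (e₊ + e^{2ℓt} e₋) = i (e₊ + e^{2ℓt} e₋)` and
`J (e₊ + e^{-2ℓt} e₋) = -i (e₊ + e^{-2ℓt} e₋)`, then
`J (e₊ - e₋) = -coth(ℓt) · i (e₊ + e₋)` and `J (i (e₊ + e₋)) = tanh(ℓt) · (e₊ - e₋)`. -/
theorem stmt_9 (l t : ℝ) (hlt : l * t ≠ 0)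
    (J : (Fin 2 → ℂ) →ₗ[ℂ] (Fin 2 → ℂ))
    (h1 : J (![1, 0] + (Real.exp (2 * l * t) : ℂ) • ![0, 1]) =
      Complex.I • (![1, 0] + (Real.exp (2 * l * t) : ℂ) • ![0, 1]))
    (h2 : J (![1, 0] + (Real.exp (-(2 * l * t)) : ℂ) • ![0, 1]) =
      (-Complex.I) • (![1, 0] + (Real.exp (-(2 * l * t)) : ℂ) • ![0, 1])) :
    J (![1, 0] - ![0, 1]) =
      (-(Real.cosh (l * t) / Real.sinh (l * t)) : ℂ) •
        (Complex.I • (![1, 0] + ![0, 1])) ∧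
    J (Complex.I • (![1, 0] + ![0, 1])) =
      ((Real.sinh (l * t) / Real.cosh (l * t) : ℝ) : ℂ) • (![1, 0] - ![0, 1]) := by
  have hs0 : l * t ≠ 0 := hlt
  set e := Real.exp (l * t) with he
  have he0 : (0:ℝ) < e := Real.exp_pos _
  have he1 : e ≠ 1 := by simp [he, Real.exp_eq_one_iff, hs0]
  have hexp2 : Real.exp (2 * l * t) = e ^ 2 := by
    rw [he, ← Real.exp_nat_mul]; ring_nf
  have hexpn : Real.exp (-(2 * l * t)) = (e ^ 2)⁻¹ := by
    rw [Real.exp_neg, hexp2]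
  have hcosh : Real.cosh (l * t) = (e + e⁻¹) / 2 := by
    rw [Real.cosh_eq, ← he, ← Real.exp_neg]
  have hsinh : Real.sinh (l * t) = (e - e⁻¹) / 2 := by
    rw [Real.sinh_eq, ← he, ← Real.exp_neg]
  set b : ℂ := (e : ℂ) with hb
  have hb0 : b ≠ 0 := by
    simp [hb, Complex.ofReal_ne_zero]; positivity
  have hbm1 : b - 1 ≠ 0 := by
    simp [hb, sub_eq_zero]
    exact_mod_cast he1
  have hbp1 : b + 1 ≠ 0 := by
    intro h
    have h' : (e : ℂ) = ((-1 : ℝ) : ℂ) := by push_cast; linear_combination h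
    have := Complex.ofReal_injective h'
    linarith
  have hb21 : b ^ 2 - 1 ≠ 0 := by
    intro h
    have : (b - 1) * (b + 1) = 0 := by ring_nf; linear_combination h
    rcases mul_eq_zero.mp this with h' | h' <;> [exact hbm1 h'; exact hbp1 h']
  have hb2p1 : b ^ 2 + 1 ≠ 0 := by
    intro h
    have : ((e ^ 2 + 1 : ℝ) : ℂ) = 0 := by push_cast [hb] at h ⊢; linear_combination h
    have := Complex.ofReal_eq_zero.mp this
    nlinarith
  have hcast2 : (Real.exp (2 * l * t) : ℂ) = b ^ 2 := by
    rw [hexp2]; push_cast [hb]; ring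
  have hcastn : (Real.exp (-(2 * l * t)) : ℂ) = (b ^ 2)⁻¹ := by
    rw [hexpn]; push_cast [hb]; ring
  have hJ1 := h1
  have hJ2 := h2
  rw [hcast2] at hJ1
  rw [hcastn] at hJ2
  -- decompositions
  have key : ∀ (c₁ c₂ : ℂ) (w : Fin 2 → ℂ),
      w = c₁ • (![1, 0] + (b ^ 2) • ![0, 1]) + c₂ • (![1, 0] + (b ^ 2)⁻¹ • ![0, 1]) →
      J w = c₁ • (Complex.I • (![1, 0] + (b ^ 2) • ![0, 1]))
          + c₂ • ((-Complex.I) • (![1, 0] + (b ^ 2)⁻¹ • ![0, 1])) := by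
    intro c₁ c₂ w hw
    rw [hw, map_add, map_smul, map_smul, hJ1, hJ2]
  have hsinhC : ((Real.sinh (l * t) : ℝ) : ℂ) = (b - b⁻¹) / 2 := by
    rw [hsinh]; push_cast [hb]; ring
  have hcoshC : ((Real.cosh (l * t) : ℝ) : ℂ) = (b + b⁻¹) / 2 := by
    rw [hcosh]; push_cast [hb]; ring
  have hsinh0 : ((Real.sinh (l * t) : ℝ) : ℂ) ≠ 0 := by
    rw [hsinhC]
    intro h
    apply hb21
    field_simp at h
    linear_combination h
  have hcosh0 : ((Real.cosh (l * t) : ℝ) : ℂ) ≠ 0 := by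
    rw [hcoshC]
    intro h
    apply hb2p1
    field_simp at h
    linear_combination h
  have hsC : Complex.sinh ((l : ℂ) * (t : ℂ)) = (b - b⁻¹) / 2 := by
    rw [← Complex.ofReal_mul, ← Complex.ofReal_sinh]; exact hsinhC
  have hcC : Complex.cosh ((l : ℂ) * (t : ℂ)) = (b + b⁻¹) / 2 := by
    rw [← Complex.ofReal_mul, ← Complex.ofReal_cosh]; exact hcoshC
  clear_value b
  have hA : (-1 : ℂ) + b ^ 2 ≠ 0 := by intro h; exact hb21 (by linear_combination h)
  have hB : (1 : ℂ) + b ^ 2 ≠ 0 := by intro h; exact hb2p1 (by linear_combination h)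
  have hC : -b ^ 2 + b ^ 4 ≠ 0 := by
    intro h
    rcases mul_eq_zero.mp (show b ^ 2 * (b ^ 2 - 1) = 0 by linear_combination h) with h' | h'
    · exact hb0 (pow_eq_zero_iff (n := 2) (by norm_num) |>.mp h')
    · exact hb21 h'
  have hD : b - b⁻¹ ≠ 0 := by
    intro h
    apply hb21
    have := sub_eq_zero.mp h
    field_simp at this
    linear_combination this
  have hE : b + b⁻¹ ≠ 0 := by
    intro h
    apply hb2p1
    have : b * (b + b⁻¹) = 0 := by rw [h]; ring
    field_simp at this
    linear_combination this
  have hF : b * 4 + b ^ 3 * 4 ≠ 0 := by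
    intro h
    rcases mul_eq_zero.mp (show (4 * b) * (1 + b ^ 2) = 0 by linear_combination h) with h' | h'
    · exact hb0 (by simpa using h')
    · exact hB h'
  have hG : (4 : ℂ) + b ^ 2 * 4 ≠ 0 := by
    intro h; exact hB (by linear_combination h / 4)
  have hH : b * (b * 2) + 2 ≠ 0 := by
    intro h; exact hB (by linear_combination h / 2)
  constructor
  · rw [key (-1/(b^2-1)) (b^2/(b^2-1)) _ (by
      funext i; fin_cases i <;>
        simp [Matrix.cons_val_zero, Matrix.cons_val_one] <;>
        field_simp <;> ring)]
    funext i
    fin_cases i <;>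
      [skip; skip] <;>
      (simp [Matrix.cons_val_zero, Matrix.cons_val_one]
       rw [hsC, hcC]
       field_simp [hA, hB, hC, hD, hE]
       ring_nf
       try simp only [Complex.I_sq]
       try ring_nf
       try field_simp [hA, hB]
       try ring)
  · rw [key (Complex.I/(b^2+1)) (Complex.I*b^2/(b^2+1)) _ (by
      funext i; fin_cases i <;>
        simp [Matrix.cons_val_zero, Matrix.cons_val_one] <;>
        field_simp <;> ring)]
    funext i
    fin_cases i <;>
      [skip; skip] <;>
      (simp [Matrix.cons_val_zero, Matrix.cons_val_one]
       rw [hsC, hcC]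
       ring_nf
       simp only [Complex.I_sq]
       ring_nf
       field_simp [hF, hG, hH]
       ring)
end

section
/- Fix real numbers ℓ and t with ℓ·t ≠ 0 and a sign ε ∈ {+1,-1}, and let e₁, e₂, e₃, e₄ be the standard basis of ℂ⁴. Let J : ℂ⁴ → ℂ⁴ be the unique ℂ-linear map which equals multiplication by i on the span of {e₁ + ε·e^{2ℓt}·e₂, e₃ + ε·e^{2ℓt}·e₄} and equals multiplication by -i on the span of {e₁ + ε·e^{-2ℓt}·e₂, e₃ + ε·e^{-2ℓt}·e₄} (these four vectors form a basis of ℂ⁴ since e^{2ℓt} ≠ e^{-2ℓt}). Define F_α = (e₁ - e₄)/√2, G_α = i·(e₁ + e₄)/√2, F_d = (e₃ - e₂)/√2, G_d = i·(e₃ + e₂)/√2, and F^± = (F_α ± ε·F_d)/√2, G^± = (G_α ± ε·G_d)/√2. Then J F⁺ = -coth(ℓt)·G⁺ and J F⁻ = -tanh(ℓt)·G⁻. -/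
/-!
Within each block `(u, v) = (e₁, ε e₂)` or `(e₃, ε e₄)`, `J` is diagonal with eigenvalues `±i` in the
basis `u + y v`, `u + y⁻¹ v`, where `y = e^{2ℓt}`. Writing `u ∓ v` in that basis gives
`J (u - v) = -coth(ℓt) i (u + v)` and `J (u + v) = -tanh(ℓt) i (u - v)`. Since `ε² = 1`,
`2F^± = (e₁ ∓ εe₂) ± ε(e₃ ∓ εe₄)` and `2G^± = i((e₁ ± εe₂) ± ε(e₃ ± εe₄))`, so the claim follows
by linearity.
-/

theorem LinearMap.sub_smul_apply_add_smul_of_eigen {R M : Type*} [CommRing R] [AddCommGroup M]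
    [Module R M] (J : M →ₗ[R] M) {u v : M} {μ ν κ : R} (lam : R)
    (hμ : J (u + μ • v) = κ • (u + μ • v)) (hν : J (u + ν • v) = (-κ) • (u + ν • v)) :
    (μ - ν) • J (u + lam • v) =
      κ • ((2 * lam - μ - ν) • u + (lam * (μ + ν) - 2 * μ * ν) • v) := by
  have hdecomp :
      (μ - ν) • (u + lam • v) = (lam - ν) • (u + μ • v) + (μ - lam) • (u + ν • v) := by
    module
  rw [← map_smul, hdecomp, map_add, map_smul, map_smul, hμ, hν]
  module

theorem LinearMap.apply_sub_and_apply_add_of_eigen_inv {K M : Type*} [Field K] [AddCommGroup M]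
    [Module K M] (J : M →ₗ[K] M) {u v : M} {y κ : K} (hy : y ≠ 0) (hy₁ : y - 1 ≠ 0)
    (hy₂ : y + 1 ≠ 0) (hμ : J (u + y • v) = κ • (u + y • v))
    (hν : J (u + y⁻¹ • v) = (-κ) • (u + y⁻¹ • v)) :
    J (u - v) = (-((y + 1) / (y - 1))) • κ • (u + v) ∧
      J (u + v) = (-((y - 1) / (y + 1))) • κ • (u - v) := by
  have hd : y - y⁻¹ ≠ 0 := by
    have : y - y⁻¹ = (y - 1) * (y + 1) / y := by field_simp; ring
    rw [this]
    exact div_ne_zero (mul_ne_zero hy₁ hy₂) hy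
  constructor
  · apply smul_right_injective M hd
    have h := J.sub_smul_apply_add_smul_of_eigen (-1) hμ hν
    rw [neg_one_smul, ← sub_eq_add_neg] at h
    dsimp only
    rw [h]
    match_scalars <;> field_simp <;> ring
  · apply smul_right_injective M hd
    have h := J.sub_smul_apply_add_smul_of_eigen 1 hμ hν
    rw [one_smul] at h
    dsimp only
    rw [h]
    match_scalars <;> field_simp <;> ring

theorem Real.cosh_div_sinh_eq (s : ℝ) :
    cosh s / sinh s = (exp (2 * s) + 1) / (exp (2 * s) - 1) := by
  have hexp : exp (2 * s) = exp s * exp s := by rw [two_mul, exp_add]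
  have hinv : exp (-s) * exp s = 1 := by rw [← exp_add, neg_add_cancel, exp_zero]
  calc cosh s / sinh s = (exp s + exp (-s)) / (exp s - exp (-s)) := by
        rw [cosh_eq, sinh_eq, div_div_div_cancel_right₀ two_ne_zero]
    _ = (exp s + exp (-s)) * exp s / ((exp s - exp (-s)) * exp s) :=
        (mul_div_mul_right _ _ (exp_ne_zero s)).symm
    _ = (exp (2 * s) + 1) / (exp (2 * s) - 1) := by rw [add_mul, sub_mul, hinv, hexp]

theorem Real.sinh_div_cosh_eq (s : ℝ) :
    sinh s / cosh s = (exp (2 * s) - 1) / (exp (2 * s) + 1) := by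
  rw [← inv_div, cosh_div_sinh_eq, inv_div]

theorem LinearMap.apply_sub_and_apply_add_of_exp_eigen {M : Type*} [AddCommGroup M]
    [Module ℂ M] (J : M →ₗ[ℂ] M) {u v : M} {s : ℝ} {κ : ℂ} (hs : s ≠ 0)
    (hμ : J (u + (Real.exp (2 * s) : ℂ) • v) = κ • (u + (Real.exp (2 * s) : ℂ) • v))
    (hν : J (u + (Real.exp (-(2 * s)) : ℂ) • v) = (-κ) • (u + (Real.exp (-(2 * s)) : ℂ) • v)) :
    J (u - v) = (-(Real.cosh s / Real.sinh s) : ℂ) • κ • (u + v) ∧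
      J (u + v) = (-(Real.sinh s / Real.cosh s) : ℂ) • κ • (u - v) := by
  have hcoth : (Real.cosh s : ℂ) / Real.sinh s =
      ((Real.exp (2 * s) : ℂ) + 1) / ((Real.exp (2 * s) : ℂ) - 1) := by
    exact_mod_cast Real.cosh_div_sinh_eq s
  have htanh : (Real.sinh s : ℂ) / Real.cosh s =
      ((Real.exp (2 * s) : ℂ) - 1) / ((Real.exp (2 * s) : ℂ) + 1) := by
    exact_mod_cast Real.sinh_div_cosh_eq s
  rw [Real.exp_neg, Complex.ofReal_inv] at hν
  rw [hcoth, htanh]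
  refine J.apply_sub_and_apply_add_of_eigen_inv ?_ ?_ ?_ hμ hν
  · exact Complex.ofReal_ne_zero.mpr (Real.exp_ne_zero _)
  · rw [sub_ne_zero, ← Complex.ofReal_one, Ne, Complex.ofReal_inj, Real.exp_eq_one_iff]
    exact mul_ne_zero two_ne_zero hs
  · rw [← Complex.ofReal_one, ← Complex.ofReal_add]
    exact Complex.ofReal_ne_zero.mpr (by positivity)

theorem LinearMap.apply_crossed_combination_of_blocks {R M : Type*} [CommRing R]
    [AddCommGroup M] [Module R M] (J : M →ₗ[R] M) {e₁ e₂ e₃ e₄ : M} {a c κ : R} (r : R)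
    (hc : c * c = 1) (h₁₂ : J (e₁ - c • e₂) = a • κ • (e₁ + c • e₂))
    (h₃₄ : J (e₃ - c • e₄) = a • κ • (e₃ + c • e₄)) :
    J (r • (r • (e₁ - e₄) + c • r • (e₃ - e₂))) =
      a • (r • ((κ * r) • (e₁ + e₄) + c • (κ * r) • (e₃ + e₂))) := by
  have hsplit : r • (r • (e₁ - e₄) + c • r • (e₃ - e₂)) =
      (r * r) • ((e₁ - c • e₂) + c • (e₃ - c • e₄)) := by
    linear_combination (norm := module) (r * r) • hc • e₄
  rw [hsplit, map_smul, map_add, map_smul, h₁₂, h₃₄]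
  linear_combination (norm := module) (a * κ * r * r) • hc • e₄

/-- The computational core of Lemma 3.8 of the paper, in `ℂ⁴` with standard basis
`e₁ = ![1,0,0,0]`, `e₂ = ![0,1,0,0]`, `e₃ = ![0,0,1,0]`, `e₄ = ![0,0,0,1]`:
if `J` is `ℂ`-linear, equal to multiplication by `i` on
`e₁ + ε e^{2ℓt} e₂` and `e₃ + ε e^{2ℓt} e₄`, and equal to multiplication by `-i` on
`e₁ + ε e^{-2ℓt} e₂` and `e₃ + ε e^{-2ℓt} e₄`, then with
`F_α = (e₁ - e₄)/√2`, `G_α = i(e₁ + e₄)/√2`, `F_d = (e₃ - e₂)/√2`, `G_d = i(e₃ + e₂)/√2`,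
`F± = (F_α ± ε F_d)/√2`, `G± = (G_α ± ε G_d)/√2`, one has
`J F⁺ = -coth(ℓt) G⁺` and `J F⁻ = -tanh(ℓt) G⁻`. -/
theorem stmt_10 (l t ε : ℝ) (hlt : l * t ≠ 0) (hε : ε = 1 ∨ ε = -1)
    (J : (Fin 4 → ℂ) →ₗ[ℂ] (Fin 4 → ℂ))
    (h1 : J (![1, 0, 0, 0] + ((ε : ℂ) * (Real.exp (2 * l * t) : ℂ)) • ![0, 1, 0, 0]) =
      Complex.I • (![1, 0, 0, 0] + ((ε : ℂ) * (Real.exp (2 * l * t) : ℂ)) • ![0, 1, 0, 0]))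
    (h2 : J (![0, 0, 1, 0] + ((ε : ℂ) * (Real.exp (2 * l * t) : ℂ)) • ![0, 0, 0, 1]) =
      Complex.I • (![0, 0, 1, 0] + ((ε : ℂ) * (Real.exp (2 * l * t) : ℂ)) • ![0, 0, 0, 1]))
    (h3 : J (![1, 0, 0, 0] + ((ε : ℂ) * (Real.exp (-(2 * l * t)) : ℂ)) • ![0, 1, 0, 0]) =
      (-Complex.I) • (![1, 0, 0, 0] + ((ε : ℂ) * (Real.exp (-(2 * l * t)) : ℂ)) • ![0, 1, 0, 0]))
    (h4 : J (![0, 0, 1, 0] + ((ε : ℂ) * (Real.exp (-(2 * l * t)) : ℂ)) • ![0, 0, 0, 1]) =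
      (-Complex.I) • (![0, 0, 1, 0] + ((ε : ℂ) * (Real.exp (-(2 * l * t)) : ℂ)) • ![0, 0, 0, 1]))
    (Fα Gα Fd Gd Fp Fm Gp Gm : Fin 4 → ℂ)
    (hFα : Fα = ((Real.sqrt 2 : ℂ))⁻¹ • (![1, 0, 0, 0] - ![0, 0, 0, 1]))
    (hGα : Gα = (Complex.I * ((Real.sqrt 2 : ℂ))⁻¹) • (![1, 0, 0, 0] + ![0, 0, 0, 1]))
    (hFd : Fd = ((Real.sqrt 2 : ℂ))⁻¹ • (![0, 0, 1, 0] - ![0, 1, 0, 0]))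
    (hGd : Gd = (Complex.I * ((Real.sqrt 2 : ℂ))⁻¹) • (![0, 0, 1, 0] + ![0, 1, 0, 0]))
    (hFp : Fp = ((Real.sqrt 2 : ℂ))⁻¹ • (Fα + (ε : ℂ) • Fd))
    (hFm : Fm = ((Real.sqrt 2 : ℂ))⁻¹ • (Fα - (ε : ℂ) • Fd))
    (hGp : Gp = ((Real.sqrt 2 : ℂ))⁻¹ • (Gα + (ε : ℂ) • Gd))
    (hGm : Gm = ((Real.sqrt 2 : ℂ))⁻¹ • (Gα - (ε : ℂ) • Gd)) :
    J Fp = (-(Real.cosh (l * t) / Real.sinh (l * t)) : ℂ) • Gp ∧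
    J Fm = (-(Real.sinh (l * t) / Real.cosh (l * t)) : ℂ) • Gm := by
  have hε2 : (ε : ℂ) * ε = 1 := by rcases hε with rfl | rfl <;> norm_num
  simp only [mul_assoc (2 : ℝ), mul_comm (ε : ℂ), mul_smul] at h1 h2 h3 h4
  obtain ⟨h₁₂, h₁₂'⟩ := J.apply_sub_and_apply_add_of_exp_eigen hlt h1 h3
  obtain ⟨h₃₄, h₃₄'⟩ := J.apply_sub_and_apply_add_of_exp_eigen hlt h2 h4
  subst Fp Fm Gp Gm Fα Fd Gα Gd
  constructor
  · exact J.apply_crossed_combination_of_blocks _ hε2 h₁₂ h₃₄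
  · -- `F⁻` and `G⁻` are `F⁺` and `G⁺` with `ε` replaced by `-ε`.
    have hε2' : -(ε : ℂ) * -ε = 1 := by rwa [neg_mul_neg]
    simp only [sub_eq_add_neg _ ((ε : ℂ) • _), ← neg_smul]
    refine J.apply_crossed_combination_of_blocks _ hε2' ?_ ?_ <;>
      rwa [neg_smul (ε : ℂ), sub_neg_eq_add, ← sub_eq_add_neg]
end
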